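/- For all γ₁, γ₂, γ₃ ∈ ℂ, the third-order operators Î₃ := p̂₂² + γ₁ q̂₂p̂₂ + γ₂((q̂₁²+q̂₂²)p̂₂² − Ĉ²) + γ₃(q̂₂³(p̂₂³ − p̂₁²p̂₂) + (q̂₁³ + 3q̂₁q̂₂²)p̂₁p̂₂² − 3i q̂₂²p̂₂² − 3i q̂₁q̂₂p̂₁p̂₂ − q̂₂p̂₂) and Î₃′ := p̂₁² + γ₁ q̂₁p̂₁ + γ₂(q̂₁²+q̂₂²)p̂₁² + γ₃(q̂₁³(p̂₁³ − p̂₁p̂₂²) + (q̂₂³ + 3q̂₁²q̂₂)p̂₁²p̂₂ − 3i q̂₁²p̂₁² − 3i q̂₁q̂₂p̂₁p̂₂ − q̂₁p̂₁) satisfy ⁅Î₃, Ĥ₃⁆ = 0, ⁅Î₃′, Ĥ₃⁆ = 0, and Ĥ₃ = Î₃ + Î₃′, where Ĥ₃ := p̂₁² + p̂₂² + γ₁D + γ₂D² + γ₃D³. -/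
import Mathlib


noncomputable section

/-- `V = ℂ[q₁,q₂]`, the polynomial ring in two variables over `ℂ`. -/
abbrev V : Type := MvPolynomial (Fin 2) ℂ

/-- `q̂₁`: multiplication by `q₁`. -/
noncomputable def q1 : Module.End ℂ V := LinearMap.mulLeft ℂ (MvPolynomial.X 0)

/-- `q̂₂`: multiplication by `q₂`. -/
noncomputable def q2 : Module.End ℂ V := LinearMap.mulLeft ℂ (MvPolynomial.X 1)

/-- `p̂₁ = −i ∂/∂q₁`. -/
noncomputable def p1 : Module.End ℂ V :=
  (-Complex.I) • (MvPolynomial.pderiv (0 : Fin 2)).toLinearMap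

/-- `p̂₂ = −i ∂/∂q₂`. -/
noncomputable def p2 : Module.End ℂ V :=
  (-Complex.I) • (MvPolynomial.pderiv (1 : Fin 2)).toLinearMap

/-- `D = q̂₁p̂₁ + q̂₂p̂₂`. -/
noncomputable def Dop : Module.End ℂ V := q1 * p1 + q2 * p2

/-- `Ĉ = q̂₁p̂₂ − q̂₂p̂₁`, the quantum angular momentum. -/
noncomputable def Cop : Module.End ℂ V := q1 * p2 - q2 * p1

/-- `Ĥ₃ = p̂₁² + p̂₂² + γ₁D + γ₂D² + γ₃D³`. -/
noncomputable def H3 (γ₁ γ₂ γ₃ : ℂ) : Module.End ℂ V :=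
  p1 ^ 2 + p2 ^ 2 + γ₁ • Dop + γ₂ • Dop ^ 2 + γ₃ • Dop ^ 3

/-- `Î₃`, the third-order quantum symmetry of `Ĥ₃`. -/
noncomputable def I3 (γ₁ γ₂ γ₃ : ℂ) : Module.End ℂ V :=
  p2 ^ 2 + γ₁ • (q2 * p2) + γ₂ • ((q1 ^ 2 + q2 ^ 2) * p2 ^ 2 - Cop ^ 2)
    + γ₃ • (q2 ^ 3 * (p2 ^ 3 - p1 ^ 2 * p2) + (q1 ^ 3 + 3 * (q1 * q2 ^ 2)) * (p1 * p2 ^ 2)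
        - (3 * Complex.I) • (q2 ^ 2 * p2 ^ 2) - (3 * Complex.I) • (q1 * q2 * p1 * p2)
        - q2 * p2)

/-- `Î₃′`, the third-order quantum symmetry of `Ĥ₃`. -/
noncomputable def I3' (γ₁ γ₂ γ₃ : ℂ) : Module.End ℂ V :=
  p1 ^ 2 + γ₁ • (q1 * p1) + γ₂ • ((q1 ^ 2 + q2 ^ 2) * p1 ^ 2)
    + γ₃ • (q1 ^ 3 * (p1 ^ 3 - p1 * p2 ^ 2) + (q2 ^ 3 + 3 * (q1 ^ 2 * q2)) * (p1 ^ 2 * p2)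
        - (3 * Complex.I) • (q1 ^ 2 * p1 ^ 2) - (3 * Complex.I) • (q1 * q2 * p1 * p2)
        - q1 * p1)

/-! ### Basic canonical commutation relations -/

lemma pq_same (i : Fin 2) (f : V) :
    MvPolynomial.pderiv i (MvPolynomial.X i * f) = f + MvPolynomial.X i * MvPolynomial.pderiv i f := by
  simp [MvPolynomial.pderiv_mul]; ring

lemma pq_diff (i j : Fin 2) (h : j ≠ i) (f : V) :
    MvPolynomial.pderiv i (MvPolynomial.X j * f) = MvPolynomial.X j * MvPolynomial.pderiv i f := by
  simp [MvPolynomial.pderiv_mul, MvPolynomial.pderiv_X_of_ne h]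

lemma p1q1 : p1 * q1 = q1 * p1 - Complex.I • 1 := by
  refine LinearMap.ext fun f => ?_
  simp [p1, q1, Module.End.mul_apply, LinearMap.mulLeft_apply, pq_same, smul_add]
  module

lemma p2q2 : p2 * q2 = q2 * p2 - Complex.I • 1 := by
  refine LinearMap.ext fun f => ?_
  simp [p2, q2, Module.End.mul_apply, LinearMap.mulLeft_apply, pq_same, smul_add]
  module

lemma p1q2 : p1 * q2 = q2 * p1 := by
  refine LinearMap.ext fun f => ?_
  simp [p1, q2, Module.End.mul_apply, LinearMap.mulLeft_apply, pq_diff 0 1 (by decide)]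

lemma p2q1 : p2 * q1 = q1 * p2 := by
  refine LinearMap.ext fun f => ?_
  simp [p2, q1, Module.End.mul_apply, LinearMap.mulLeft_apply, pq_diff 1 0 (by decide)]

lemma q2q1 : q2 * q1 = q1 * q2 := by
  refine LinearMap.ext fun f => ?_
  simp [q1, q2, Module.End.mul_apply, LinearMap.mulLeft_apply]; ring

lemma pderiv_comm' (f : V) :
    MvPolynomial.pderiv (1:Fin 2) (MvPolynomial.pderiv (0:Fin 2) f)
      = MvPolynomial.pderiv (0:Fin 2) (MvPolynomial.pderiv (1:Fin 2) f) := by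
  induction f using MvPolynomial.induction_on with
  | C a => simp
  | add f g hf hg => simp [hf, hg]
  | mul_X f i hf => fin_cases i <;>
      simp [MvPolynomial.pderiv_mul, hf, MvPolynomial.pderiv_X_of_ne] <;> ring

lemma p2p1 : p2 * p1 = p1 * p2 := by
  refine LinearMap.ext fun f => ?_
  simp [p1, p2, Module.End.mul_apply, pderiv_comm' f]

/-! ### Rewriting rules for normal ordering -/

lemma p1q1' (x : Module.End ℂ V) : p1 * (q1 * x) = q1 * (p1 * x) - Complex.I • x := by
  rw [← mul_assoc, p1q1, sub_mul, mul_assoc, smul_mul_assoc, one_mul]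
lemma p2q2' (x : Module.End ℂ V) : p2 * (q2 * x) = q2 * (p2 * x) - Complex.I • x := by
  rw [← mul_assoc, p2q2, sub_mul, mul_assoc, smul_mul_assoc, one_mul]
lemma p1q2' (x : Module.End ℂ V) : p1 * (q2 * x) = q2 * (p1 * x) := by
  rw [← mul_assoc, p1q2, mul_assoc]
lemma p2q1' (x : Module.End ℂ V) : p2 * (q1 * x) = q1 * (p2 * x) := by
  rw [← mul_assoc, p2q1, mul_assoc]
lemma q2q1' (x : Module.End ℂ V) : q2 * (q1 * x) = q1 * (q2 * x) := by
  rw [← mul_assoc, q2q1, mul_assoc]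
lemma p2p1' (x : Module.End ℂ V) : p2 * (p1 * x) = p1 * (p2 * x) := by
  rw [← mul_assoc, p2p1, mul_assoc]
lemma three_mul_eq (x : Module.End ℂ V) : (3 : Module.End ℂ V) * x = (3:ℂ) • x := by
  rw [Algebra.smul_def, map_ofNat]

/-! ### The main operator identities -/

set_option maxHeartbeats 4000000 in
lemma sum_eq (γ₁ γ₂ γ₃ : ℂ) : H3 γ₁ γ₂ γ₃ = I3 γ₁ γ₂ γ₃ + I3' γ₁ γ₂ γ₃ := by
  simp only [H3, I3, I3', Dop, Cop, three_mul_eq, pow_succ, pow_zero, one_mul,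
    mul_add, add_mul, mul_sub, sub_mul, smul_mul_assoc, mul_smul_comm, smul_smul,
    smul_sub, smul_add, mul_assoc,
    p1q1, p2q2, p1q2, p2q1, q2q1, p2p1, p1q1', p2q2', p1q2', p2q1', q2q1', p2p1',
    mul_one]
  match_scalars <;> (ring_nf; try (simp only [Complex.I_sq, pow_succ, pow_zero, one_mul, Complex.I_mul_I]; ring))

set_option maxHeartbeats 4000000 in
lemma comm_eq (γ₁ γ₂ γ₃ : ℂ) : I3 γ₁ γ₂ γ₃ * I3' γ₁ γ₂ γ₃ = I3' γ₁ γ₂ γ₃ * I3 γ₁ γ₂ γ₃ := by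
  simp only [I3, I3', Dop, Cop, three_mul_eq, pow_succ, pow_zero, one_mul,
    mul_add, add_mul, mul_sub, sub_mul, smul_mul_assoc, mul_smul_comm, smul_smul,
    smul_sub, smul_add, mul_assoc,
    p1q1, p2q2, p1q2, p2q1, q2q1, p2p1, p1q1', p2q2', p1q2', p2q1', q2q1', p2p1',
    mul_one]
  match_scalars <;> (ring_nf; try (simp only [Complex.I_sq, pow_succ, pow_zero, one_mul, Complex.I_mul_I]; ring))

/-- `Î₃` and `Î₃′` commute with `Ĥ₃` and `Ĥ₃ = Î₃ + Î₃′`. -/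
theorem cubic_zernike_symmetries (γ₁ γ₂ γ₃ : ℂ) :
    I3 γ₁ γ₂ γ₃ * H3 γ₁ γ₂ γ₃ - H3 γ₁ γ₂ γ₃ * I3 γ₁ γ₂ γ₃ = 0 ∧
    I3' γ₁ γ₂ γ₃ * H3 γ₁ γ₂ γ₃ - H3 γ₁ γ₂ γ₃ * I3' γ₁ γ₂ γ₃ = 0 ∧
    H3 γ₁ γ₂ γ₃ = I3 γ₁ γ₂ γ₃ + I3' γ₁ γ₂ γ₃ := by
  refine ⟨?_, ?_, sum_eq γ₁ γ₂ γ₃⟩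
  · rw [sum_eq γ₁ γ₂ γ₃, mul_add, add_mul, comm_eq]
    abel
  · rw [sum_eq γ₁ γ₂ γ₃, mul_add, add_mul, ← comm_eq]
    abel
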